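/- Let O ⊆ {1,…,p}² be a union O = ⋃_{k=1}^K V_k × V_k of products of subsets V_k covering all singletons (each i ∈ some V_k). If some pair (i,j) with i ≠ j lies outside O, then there exist two distinct positive definite matrices Σ¹ ≠ Σ² that agree on all entries indexed by O. -/

import Mathlib

open Matrix

/-!
The observations only constrain the entries indexed by `O`, which is symmetric and misses both
`(i, j)` and `(j, i)`. Hence `1` and its symmetric perturbation `1 + (Eᵢⱼ + Eⱼᵢ) / 2` are
indistinguishable; the latter stays positive definite because `|2 c xᵢ xⱼ| ≤ |c| (xᵢ² + xⱼ²)`,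
so a perturbation with `|c| < 1` cannot cancel the identity's quadratic form.
-/

namespace Matrix

variable {n α : Type*} [DecidableEq n]

lemma isHermitian_single_add_single [AddCommMonoid α] [StarAddMonoid α] (i j : n) (c : α) :
    (single i j c + single j i (star c)).IsHermitian := by
  simp [IsHermitian, conjTranspose_add, add_comm]

lemma single_add_single_apply_of_ne [AddZeroClass α] {i j a b : n} (c d : α)
    (hij : (a, b) ≠ (i, j)) (hji : (a, b) ≠ (j, i)) :
    (single i j c + single j i d) a b = 0 := by
  rw [add_apply, single_apply_of_ne, single_apply_of_ne, add_zero]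
  · rintro ⟨rfl, rfl⟩; exact hji rfl
  · rintro ⟨rfl, rfl⟩; exact hij rfl

lemma dotProduct_single_mulVec [Fintype n] [CommSemiring α] (i j : n) (c : α) (x : n → α) :
    x ⬝ᵥ (single i j c *ᵥ x) = c * x i * x j := by
  simp [single_mulVec, dotProduct, Function.update_apply, mul_comm, mul_left_comm]

lemma sq_add_sq_le_dotProduct_self [Fintype n] {i j : n} (hij : i ≠ j) (x : n → ℝ) :
    x i ^ 2 + x j ^ 2 ≤ x ⬝ᵥ x := by
  simpa [Finset.sum_pair hij, dotProduct, sq] using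
    Finset.sum_le_sum_of_subset_of_nonneg (Finset.subset_univ {i, j})
      (fun k _ _ => mul_self_nonneg (x k))

lemma posDef_one_add_single_add_single [Fintype n] {i j : n} (hij : i ≠ j) {c : ℝ}
    (hc : |c| < 1) : (1 + (single i j c + single j i c)).PosDef := by
  rw [posDef_iff_dotProduct_mulVec]
  refine ⟨isHermitian_one.add (by simpa using isHermitian_single_add_single i j c), ?_⟩
  intro x hx
  have hform : star x ⬝ᵥ ((1 + (single i j c + single j i c)) *ᵥ x) =
      x ⬝ᵥ x + 2 * c * x i * x j := by
    simp only [star_trivial, add_mulVec, one_mulVec, dotProduct_add, dotProduct_single_mulVec]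
    ring
  have hcross : -(|c| * (x i ^ 2 + x j ^ 2)) ≤ 2 * c * x i * x j := by
    rcases abs_cases c with ⟨h, hc0⟩ | ⟨h, hc0⟩ <;> rw [h] <;>
      nlinarith [sq_nonneg (x i + x j), sq_nonneg (x i - x j)]
  have hpos : 0 < x ⬝ᵥ x := by simpa using dotProduct_star_self_pos_iff.mpr hx
  have hsq := sq_add_sq_le_dotProduct_self hij x
  rw [hform]
  nlinarith [abs_nonneg c]

end Matrix

lemma Set.swap_mem_iUnion_prod_self {ι α : Type*} {V : ι → Set α} {a b : α}
    (h : (a, b) ∈ ⋃ k, V k ×ˢ V k) : (b, a) ∈ ⋃ k, V k ×ˢ V k := by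
  simp only [Set.mem_iUnion, Set.mem_prod] at h ⊢
  exact h.imp fun _ => And.symm

theorem stmt18_general {p K : ℕ} (V : Fin K → Set (Fin p))
    (i j : Fin p) (hij : i ≠ j)
    (hmiss : (i, j) ∉ ⋃ k, (V k) ×ˢ (V k)) :
    ∃ S₁ S₂ : Matrix (Fin p) (Fin p) ℝ, S₁.PosDef ∧ S₂.PosDef ∧ S₁ ≠ S₂ ∧
      ∀ a b : Fin p, (a, b) ∈ ⋃ k, (V k) ×ˢ (V k) → S₁ a b = S₂ a b := by
  refine ⟨1, 1 + (single i j (1 / 2) + single j i (1 / 2)), PosDef.one,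
    posDef_one_add_single_add_single hij (by norm_num [abs_of_pos]), fun h => ?_, ?_⟩
  · have hentry := congrFun (congrFun h i) j
    simp [hij] at hentry
  · intro a b hab
    have hij' : (a, b) ≠ (i, j) := fun h => hmiss (h ▸ hab)
    have hji' : (a, b) ≠ (j, i) := fun h =>
      hmiss (Set.swap_mem_iUnion_prod_self (h ▸ hab))
    rw [Matrix.add_apply, single_add_single_apply_of_ne _ _ hij' hji', add_zero]

/-- Non-identifiability under graph-quilting observations: if the observed pair set
`O = ⋃ₖ Vₖ × Vₖ` covers every singleton but misses some off-diagonal pair `(i,j)`, then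
there exist two distinct positive definite matrices agreeing on all entries indexed by `O`. -/
theorem stmt18 {p K : ℕ} (V : Fin K → Set (Fin p))
    (hcover : ∀ i : Fin p, ∃ k, i ∈ V k)
    (i j : Fin p) (hij : i ≠ j)
    (hmiss : (i, j) ∉ ⋃ k, (V k) ×ˢ (V k)) :
    ∃ S₁ S₂ : Matrix (Fin p) (Fin p) ℝ, S₁.PosDef ∧ S₂.PosDef ∧ S₁ ≠ S₂ ∧
      ∀ a b : Fin p, (a, b) ∈ ⋃ k, (V k) ×ˢ (V k) → S₁ a b = S₂ a b :=
  stmt18_general V i j hij hmiss
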